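/- For every k-uniform hypergraph S ⊆ binom([n],k) and every invertible n×n matrix g over a field, the partial shift Δ_g(S) has the same cardinality as S. -/

import Mathlib

open Finset
open scoped symmDiff

/-- The type of `k`-element subsets of `[n]`. -/
def KSet (n k : ℕ) := {s : Finset (Fin n) // s.card = k}

instance {n k : ℕ} : Fintype (KSet n k) := by unfold KSet; infer_instance
instance {n k : ℕ} : DecidableEq (KSet n k) := by unfold KSet; infer_instance

/-- Lexicographic strict order on finsets: `s <lex t` iff the minimum of the
symmetric difference `s ∆ t` belongs to `s`. -/
def lexLt {n : ℕ} (s t : Finset (Fin n)) : Prop :=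
  ∃ a, a ∈ s \ t ∧ ∀ b ∈ s ∆ t, a ≤ b

/-- The `k`-th compound matrix of `g`. -/
def compound {F : Type*} [Field F] {n : ℕ} (g : Matrix (Fin n) (Fin n) F) (k : ℕ) :
    Matrix (KSet n k) (KSet n k) F :=
  fun σ τ => (Matrix.of fun a b : Fin k =>
    g (σ.1.orderIsoOfFin σ.2 a) (τ.1.orderIsoOfFin τ.2 b)).det

/-- The column of the matrix `g^{∧S}` (rows of the `k`-th compound matrix of `g`
indexed by the hypergraph `S`) corresponding to the `k`-set `σ`. -/
def shiftCol {F : Type*} [Field F] {n k : ℕ} (g : Matrix (Fin n) (Fin n) F)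
    (S : Finset (KSet n k)) (σ : KSet n k) : {ρ // ρ ∈ S} → F :=
  fun ρ => compound g k ρ.1 σ

/-- The partial exterior shift `Δ_g(S)`: those `σ` whose column of `g^{∧S}` is
not in the span of the lexicographically earlier columns. -/
def Delta {F : Type*} [Field F] {n k : ℕ} (g : Matrix (Fin n) (Fin n) F)
    (S : Finset (KSet n k)) : Set (KSet n k) :=
  {σ | shiftCol g S σ ∉
    Submodule.span F (shiftCol g S '' {ρ : KSet n k | lexLt ρ.1 σ.1})}

/-!
The columns of a matrix that are not in the span of the earlier columns (for any well-order on
the columns) form a basis of its column space; for the lexicographic order on `k`-sets these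
are exactly the columns indexed by `Δ_g(S)`. The column space of `g^{∧S}` is all of `F^S`,
because `g^{∧S}` is a row-submatrix of the compound matrix, which is invertible: it is the
matrix of `⋀^k g` in the standard basis of `⋀^k Fⁿ`, and `⋀^k` is functorial.
Hence `|Δ_g(S)| = rank g^{∧S} = |S|`.
-/

section Pivot

open Submodule

variable (K : Type*) {V ι : Type*} [DivisionRing K] [AddCommGroup V] [Module K V]
  [LinearOrder ι] (f : ι → V)

def pivotSet : Set ι := {i | f i ∉ span K (f '' Set.Iio i)}

variable {K f}

theorem mem_span_image_pivotSet [WellFoundedLT ι] (i : ι) :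
    f i ∈ span K (f '' pivotSet K f) := by
  induction i using WellFoundedLT.induction with
  | _ i ih =>
    by_cases hi : i ∈ pivotSet K f
    · exact subset_span ⟨i, hi, rfl⟩
    · refine span_le.2 ?_ (not_not.1 hi)
      rintro _ ⟨j, hj, rfl⟩
      exact ih j hj

theorem span_image_pivotSet [WellFoundedLT ι] :
    span K (f '' pivotSet K f) = span K (Set.range f) :=
  le_antisymm (span_mono (Set.image_subset_range _ _))
    (span_le.2 (Set.range_subset_iff.2 mem_span_image_pivotSet))

theorem linearIndepOn_pivotSet [Finite ι] : LinearIndepOn K f (pivotSet K f) := by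
  classical
  have := Fintype.ofFinite (pivotSet K f)
  suffices ∀ s : Finset ι, ↑s ⊆ pivotSet K f → LinearIndepOn K f s by
    simpa using this (pivotSet K f).toFinset (by simp)
  intro s
  induction s using Finset.induction_on_max with
  | empty => simp
  | insert a s hlt ih =>
    intro hs
    rw [Finset.coe_insert, Set.insert_subset_iff] at hs
    rw [Finset.coe_insert, linearIndepOn_insert fun ha => (hlt a ha).false]
    exact ⟨ih hs.2, fun hmem => hs.1 (span_mono (Set.image_mono fun x hx => hlt x hx) hmem)⟩

theorem ncard_pivotSet [Finite ι] :
    (pivotSet K f).ncard = Module.finrank K (span K (Set.range f)) := by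
  have := Fintype.ofFinite (pivotSet K f)
  rw [← span_image_pivotSet, Set.image_eq_range, finrank_span_eq_card linearIndepOn_pivotSet,
    Set.ncard_eq_toFinset_card', Set.toFinset_card]

end Pivot

/-- The indicator of the complement, so that of two sets the one containing the first element
where they differ is the smaller. -/
def lexKey {n : ℕ} (s : Finset (Fin n)) : Lex (Fin n → Bool) := toLex fun i => decide (i ∉ s)

theorem lexKey_injective {n : ℕ} : Function.Injective (lexKey (n := n)) := by
  intro s t h
  ext i
  simpa [lexKey] using congrFun h i

theorem lexLt_iff_lexKey_lt {n : ℕ} {s t : Finset (Fin n)} :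
    lexLt s t ↔ lexKey s < lexKey t := by
  show _ ↔ ∃ i, (∀ j < i, _) ∧ _
  simp only [lexLt, mem_sdiff, mem_symmDiff, lexKey, Pi.toLex_apply]
  refine exists_congr fun a => and_comm.trans (and_congr ?_ ?_)
  · grind
  · by_cases a ∈ s <;> by_cases a ∈ t <;> simp [*]

noncomputable instance {n k : ℕ} : LinearOrder (KSet n k) :=
  LinearOrder.lift' (fun σ => lexKey σ.1) (lexKey_injective.comp Subtype.val_injective)

theorem KSet.lt_iff_lexLt {n k : ℕ} {σ τ : KSet n k} : σ < τ ↔ lexLt σ.1 τ.1 :=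
  lexLt_iff_lexKey_lt.symm

theorem Delta_eq_pivotSet {F : Type*} [Field F] {n k : ℕ} (g : Matrix (Fin n) (Fin n) F)
    (S : Finset (KSet n k)) : Delta g S = pivotSet F (shiftCol g S) := by
  ext σ
  simp only [Delta, pivotSet, Set.Iio, KSet.lt_iff_lexLt, Set.mem_ofPred_eq]

def KSet.equivPowersetCard (n k : ℕ) : KSet n k ≃ Set.powersetCard (Fin n) k :=
  Equiv.subtypeEquivRight fun _ => Set.powersetCard.mem_iff.symm

open exteriorPower in
theorem compound_eq_toMatrix_exteriorPower_map {F : Type*} [Field F] {n : ℕ}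
    (g : Matrix (Fin n) (Fin n) F) (k : ℕ) :
    compound g k = (LinearMap.toMatrix ((Pi.basisFun F (Fin n)).exteriorPower k)
      ((Pi.basisFun F (Fin n)).exteriorPower k) (map k (Matrix.toLin' g))).submatrix
      (KSet.equivPowersetCard n k) (KSet.equivPowersetCard n k) := by
  ext σ τ
  rw [Matrix.submatrix_apply, LinearMap.toMatrix_apply, basis_apply, map_apply_ιMulti_family,
    basis_repr_apply, ιMulti_family, ιMultiDual_apply_ιMulti, ← Matrix.det_transpose]
  simp [compound, Set.powersetCard.ofFinEmbEquiv_symm_apply, Matrix.transpose]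
  rfl

theorem exteriorPower.isUnit_map {R M : Type*} [CommRing R] [AddCommGroup M] [Module R M]
    {f : Module.End R M} (hf : IsUnit f) (k : ℕ) : IsUnit (map k f) :=
  hf.map ({ toFun := map k, map_one' := map_id, map_mul' := fun f g => map_comp g f } :
    Module.End R M →* Module.End R (⋀[R]^k M))

theorem isUnit_compound {F : Type*} [Field F] {n : ℕ} {g : Matrix (Fin n) (Fin n) F}
    (hg : IsUnit g) (k : ℕ) : IsUnit (compound g k) := by
  rw [compound_eq_toMatrix_exteriorPower_map, Matrix.isUnit_submatrix_equiv,
    LinearMap.isUnit_toMatrix_iff]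
  exact exteriorPower.isUnit_map (Matrix.isUnit_toLin'_iff.2 hg) k

theorem Matrix.span_range_col_submatrix_of_isUnit {R m ι : Type*} [CommRing R] [Fintype m]
    [DecidableEq m] {A : Matrix m m R} (hA : IsUnit A) {e : ι → m} (he : Function.Injective e) :
    Submodule.span R (Set.range (A.submatrix e id).col) = ⊤ := by
  rw [← Matrix.range_mulVecLin, LinearMap.range_eq_top]
  intro y
  obtain ⟨x, hx⟩ := Matrix.mulVec_surjective_iff_isUnit.2 hA (Function.extend e y 0)
  exact ⟨x, funext fun i => (congrFun hx (e i)).trans (he.extend_apply y 0 i)⟩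

/-- The partial shift preserves cardinality: `|Δ_g(S)| = |S|`. -/
theorem ncard_Delta {F : Type*} [Field F] {n k : ℕ}
    (g : Matrix (Fin n) (Fin n) F) (hg : IsUnit g.det) (S : Finset (KSet n k)) :
    (Delta g S).ncard = S.card := by
  have hspan : Submodule.span F (Set.range (shiftCol g S)) = ⊤ :=
    Matrix.span_range_col_submatrix_of_isUnit
      (isUnit_compound ((Matrix.isUnit_iff_isUnit_det g).2 hg) k) Subtype.val_injective
  rw [Delta_eq_pivotSet, ncard_pivotSet, hspan, finrank_top, Module.finrank_fintype_fun_eq_card,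
    Fintype.card_coe]
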